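/- arXiv:2512.19827 — 8 statements merged into one kernel-verified Lean document; each statement's English description precedes it below -/
import Mathlib

section
/- Let E (cells) and K (commodities) be finite types. For every i ∈ E and k ∈ K let d i k : ℝ → ℝ be concave on [0,∞), for every i ∈ E let s i : ℝ → ℝ be concave on [0,∞), let w i k > 0 be positive weights, and let R i j k ≥ 0 be fixed turning ratios. Then the set F = { (x, z, f) : for all i ∈ E, j ∈ E, k ∈ K: 0 ≤ x i k; 0 ≤ z i k ≤ d i k (x i k); Σ_{k ∈ K} Σ_{j ∈ E} f j i k ≤ s i (Σ_{k ∈ K} w i k · x i k); f i j k = R i j k · z i k; and f i j k ≥ 0 } is a convex subset of (E → K → ℝ) × (E → K → ℝ) × (E → E → K → ℝ). -/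
/-- The feasible set of the relaxed MC-FNC constraints (demand, supply, routing,
nonnegativity) is convex, for demand functions `d i k` concave on `[0, ∞)`,
supply functions `s i` concave on `[0, ∞)`, positive weights `w i k`, and
nonnegative turning ratios `R i j k`. -/
theorem relaxed_constraint_set_convex
    (E K : Type*) [Fintype E] [Fintype K]
    (d : E → K → ℝ → ℝ)
    (hd : ∀ i k, ConcaveOn ℝ (Set.Ici (0 : ℝ)) (d i k))
    (s : E → ℝ → ℝ)
    (hs : ∀ i, ConcaveOn ℝ (Set.Ici (0 : ℝ)) (s i))
    (w : E → K → ℝ) (hw : ∀ i k, 0 < w i k)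
    (R : E → E → K → ℝ) (hR : ∀ i j k, 0 ≤ R i j k) :
    Convex ℝ {p : (E → K → ℝ) × (E → K → ℝ) × (E → E → K → ℝ) |
      (∀ i k, 0 ≤ p.1 i k) ∧
      (∀ i k, 0 ≤ p.2.1 i k ∧ p.2.1 i k ≤ d i k (p.1 i k)) ∧
      (∀ i, (∑ k, ∑ j, p.2.2 j i k) ≤ s i (∑ k, w i k * p.1 i k)) ∧
      (∀ i j k, p.2.2 i j k = R i j k * p.2.1 i k) ∧
      (∀ i j k, 0 ≤ p.2.2 i j k)} := by
  rintro ⟨x₁, z₁, f₁⟩ ⟨hx₁, hz₁, hs₁, hf₁, hfn₁⟩ ⟨x₂, z₂, f₂⟩ ⟨hx₂, hz₂, hs₂, hf₂, hfn₂⟩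
    a b ha hb hab
  refine ⟨?_, ?_, ?_, ?_, ?_⟩
  · intro i k
    simp only [Prod.smul_fst, Prod.fst_add, Pi.add_apply, Pi.smul_apply, smul_eq_mul]
    exact add_nonneg (mul_nonneg ha (hx₁ i k)) (mul_nonneg hb (hx₂ i k))
  · intro i k
    simp only [Prod.smul_snd, Prod.smul_fst, Prod.snd_add, Prod.fst_add, Pi.add_apply,
      Pi.smul_apply, smul_eq_mul]
    constructor
    · exact add_nonneg (mul_nonneg ha (hz₁ i k).1) (mul_nonneg hb (hz₂ i k).1)
    · calc a * z₁ i k + b * z₂ i k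
          ≤ a * d i k (x₁ i k) + b * d i k (x₂ i k) := by
            gcongr <;> [exact (hz₁ i k).2; exact (hz₂ i k).2]
        _ ≤ d i k (a * x₁ i k + b * x₂ i k) := by
            have := (hd i k).2 (hx₁ i k) (hx₂ i k) ha hb hab
            simpa using this
  · intro i
    simp only [Prod.smul_snd, Prod.smul_fst, Prod.snd_add, Prod.fst_add, Pi.add_apply,
      Pi.smul_apply, smul_eq_mul]
    have key : ∀ y : E → K → ℝ, (∑ k, w i k * (a * x₁ i k + b * x₂ i k)) =
        a * (∑ k, w i k * x₁ i k) + b * (∑ k, w i k * x₂ i k) := by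
      intro _
      rw [Finset.mul_sum, Finset.mul_sum, ← Finset.sum_add_distrib]
      congr 1; ext k; ring
    calc (∑ k, ∑ j, (a * f₁ j i k + b * f₂ j i k))
        = a * (∑ k, ∑ j, f₁ j i k) + b * (∑ k, ∑ j, f₂ j i k) := by
          rw [Finset.mul_sum, Finset.mul_sum, ← Finset.sum_add_distrib]
          congr 1; ext k
          rw [Finset.mul_sum, Finset.mul_sum, ← Finset.sum_add_distrib]
      _ ≤ a * s i (∑ k, w i k * x₁ i k) + b * s i (∑ k, w i k * x₂ i k) := by
          gcongr <;> [exact hs₁ i; exact hs₂ i]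
      _ ≤ s i (∑ k, w i k * (a * x₁ i k + b * x₂ i k)) := by
          rw [key x₁]
          have h1 : (0:ℝ) ≤ ∑ k, w i k * x₁ i k :=
            Finset.sum_nonneg fun k _ => mul_nonneg (hw i k).le (hx₁ i k)
          have h2 : (0:ℝ) ≤ ∑ k, w i k * x₂ i k :=
            Finset.sum_nonneg fun k _ => mul_nonneg (hw i k).le (hx₂ i k)
          have := (hs i).2 h1 h2 ha hb hab
          simpa using this
  · intro i j k
    simp only [Prod.smul_snd, Prod.smul_fst, Prod.snd_add, Prod.fst_add, Pi.add_apply,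
      Pi.smul_apply, smul_eq_mul]
    have h1 : f₁ i j k = R i j k * z₁ i k := hf₁ i j k
    have h2 : f₂ i j k = R i j k * z₂ i k := hf₂ i j k
    rw [h1, h2]; ring
  · intro i j k
    simp only [Prod.smul_snd, Prod.snd_add, Pi.add_apply, Pi.smul_apply, smul_eq_mul]
    exact add_nonneg (mul_nonneg ha (hfn₁ i j k)) (mul_nonneg hb (hfn₂ i j k))
end

section
/- Fix finite types E (cells) and K (commodities), a horizon N ∈ ℕ, a step size h > 0, demand functions d i k : ℝ → ℝ concave on [0,∞), supply functions s i : ℝ → ℝ concave on [0,∞), positive weights w i k > 0, exogenous inflows λ : Fin N → E → K → ℝ, turning ratios R : Fin N → E → E → K → ℝ with R t i j k ≥ 0, and an initial condition x⁰ : E → K → ℝ. Then the feasible set of the discrete-time relaxed MC-FNC problem, namely the set of triples (x, z, f) with x : Fin (N+1) → E → K → ℝ, z : Fin N → E → K → ℝ, f : Fin N → E → E → K → ℝ satisfying: x 0 = x⁰; for all t, i, k: x (t+1) i k = x t i k + h·(λ t i k + Σ_{j ∈ E} f t j i k − z t i k); 0 ≤ x t i k; 0 ≤ z t i k ≤ d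 i k (x t i k); Σ_{k ∈ K} Σ_{j ∈ E} f t j i k ≤ s i (Σ_{k ∈ K} w i k · x t i k); f t i j k = R t i j k · z t i k; and f t i j k ≥ 0, is a convex set. -/
/-!
All constraints except demand and supply are affine, hence preserved by convex combinations.
The demand and supply constraints put a point below the graph of a concave function at a
nonnegative argument (nonnegative by the state constraints and the positive weights), and such
hypographs are convex.
-/

open Finset

theorem ConcaveOn.smul_add_smul_le_apply {𝕜 E β : Type*} [Semiring 𝕜] [PartialOrder 𝕜]
    [AddCommMonoid E] [AddCommMonoid β] [PartialOrder β] [IsOrderedAddMonoid β] [SMul 𝕜 E]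
    [Module 𝕜 β] [PosSMulMono 𝕜 β] {s : Set E} {f : E → β} (hf : ConcaveOn 𝕜 s f)
    {x y : E} {u v : β} (hx : x ∈ s) (hy : y ∈ s) (hu : u ≤ f x) (hv : v ≤ f y)
    {a b : 𝕜} (ha : 0 ≤ a) (hb : 0 ≤ b) (hab : a + b = 1) :
    a • u + b • v ≤ f (a • x + b • y) :=
  (add_le_add (smul_le_smul_of_nonneg_left hu ha) (smul_le_smul_of_nonneg_left hv hb)).trans
    (hf.2 hx hy ha hb hab)

theorem ConcaveOn.smul_add_smul_le_apply_sum_mul {ι : Type*} (t : Finset ι) {φ : ℝ → ℝ}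
    (hφ : ConcaveOn ℝ (Set.Ici 0) φ) {w y y' : ι → ℝ} (hw : ∀ i ∈ t, 0 ≤ w i)
    (hy : ∀ i ∈ t, 0 ≤ y i) (hy' : ∀ i ∈ t, 0 ≤ y' i) {u v a b : ℝ}
    (hu : u ≤ φ (∑ i ∈ t, w i * y i)) (hv : v ≤ φ (∑ i ∈ t, w i * y' i))
    (ha : 0 ≤ a) (hb : 0 ≤ b) (hab : a + b = 1) :
    a * u + b * v ≤ φ (∑ i ∈ t, w i * (a * y i + b * y' i)) := by
  have hload : ∑ i ∈ t, w i * (a * y i + b * y' i) =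
      a * ∑ i ∈ t, w i * y i + b * ∑ i ∈ t, w i * y' i := by
    simp only [mul_add, mul_left_comm (w _), sum_add_distrib, mul_sum]
  rw [hload]
  exact hφ.smul_add_smul_le_apply (sum_nonneg fun i hi => mul_nonneg (hw i hi) (hy i hi))
    (sum_nonneg fun i hi => mul_nonneg (hw i hi) (hy' i hi)) hu hv ha hb hab

theorem discrete_relaxed_feasible_set_convex_general
    (E K : Type*) [Fintype E] [Fintype K] (N : ℕ)
    (h : ℝ)
    (d : E → K → ℝ → ℝ)
    (hd : ∀ i k, ConcaveOn ℝ (Set.Ici (0 : ℝ)) (d i k))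
    (s : E → ℝ → ℝ)
    (hs : ∀ i, ConcaveOn ℝ (Set.Ici (0 : ℝ)) (s i))
    (w : E → K → ℝ) (hw : ∀ i k, 0 < w i k)
    (lam : Fin N → E → K → ℝ)
    (R : Fin N → E → E → K → ℝ)
    (x0 : E → K → ℝ) :
    Convex ℝ {p : (Fin (N + 1) → E → K → ℝ) × (Fin N → E → K → ℝ) ×
        (Fin N → E → E → K → ℝ) |
      p.1 0 = x0 ∧
      (∀ (t : Fin N) i k, p.1 t.succ i k =
        p.1 t.castSucc i k + h * (lam t i k + (∑ j, p.2.2 t j i k) - p.2.1 t i k)) ∧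
      (∀ t i k, 0 ≤ p.1 t i k) ∧
      (∀ (t : Fin N) i k, 0 ≤ p.2.1 t i k ∧ p.2.1 t i k ≤ d i k (p.1 t.castSucc i k)) ∧
      (∀ (t : Fin N) i, (∑ k, ∑ j, p.2.2 t j i k) ≤
        s i (∑ k, w i k * p.1 t.castSucc i k)) ∧
      (∀ (t : Fin N) i j k, p.2.2 t i j k = R t i j k * p.2.1 t i k) ∧
      (∀ (t : Fin N) i j k, 0 ≤ p.2.2 t i j k)} := by
  rintro ⟨x, z, f⟩ hp ⟨x', z', f'⟩ hq a b ha hb hab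
  obtain ⟨hx0, hx, hxnn, hz, hf, hfR, hfnn⟩ := hp
  obtain ⟨hx0', hx', hxnn', hz', hf', hfR', hfnn'⟩ := hq
  dsimp only at *
  have combo_nonneg {u v : ℝ} (hu : 0 ≤ u) (hv : 0 ≤ v) : 0 ≤ a * u + b * v :=
    convex_Ici (0 : ℝ) hu hv ha hb hab
  simp only [Prod.smul_mk, Prod.mk_add_mk, Set.mem_ofPred_eq, Pi.add_apply, Pi.smul_apply,
    smul_eq_mul]
  refine ⟨?_, fun t i k => ?_, fun t i k => combo_nonneg (hxnn t i k) (hxnn' t i k),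
    fun t i k => ⟨combo_nonneg (hz t i k).1 (hz' t i k).1, ?_⟩, fun t i => ?_,
    fun t i j k => ?_, fun t i j k => combo_nonneg (hfnn t i j k) (hfnn' t i j k)⟩
  · rw [hx0, hx0', ← add_smul, hab, one_smul]
  · rw [hx t i k, hx' t i k, sum_add_distrib, ← mul_sum, ← mul_sum]
    linear_combination h * lam t i k * hab
  · exact (hd i k).smul_add_smul_le_apply (hxnn _ i k) (hxnn' _ i k) (hz t i k).2
      (hz' t i k).2 ha hb hab
  · simpa only [sum_add_distrib, mul_sum] using
      (hs i).smul_add_smul_le_apply_sum_mul univ (fun k _ => (hw i k).le)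
        (fun k _ => hxnn _ i k) (fun k _ => hxnn' _ i k) (hf t i) (hf' t i) ha hb hab
  · rw [hfR t i j k, hfR' t i j k]
    ring

/-- The feasible set of the discrete-time relaxed MC-FNC problem is convex:
trajectories `(x, z, f)` satisfy the initial condition, the mass-conservation
update, nonnegativity, demand constraints with `d i k` concave on `[0, ∞)`,
supply constraints with `s i` concave on `[0, ∞)` and positive weights `w i k`,
and the routing equalities with nonnegative turning ratios. -/
theorem discrete_relaxed_feasible_set_convex
    (E K : Type*) [Fintype E] [Fintype K] (N : ℕ)
    (h : ℝ) (hh : 0 < h)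
    (d : E → K → ℝ → ℝ)
    (hd : ∀ i k, ConcaveOn ℝ (Set.Ici (0 : ℝ)) (d i k))
    (s : E → ℝ → ℝ)
    (hs : ∀ i, ConcaveOn ℝ (Set.Ici (0 : ℝ)) (s i))
    (w : E → K → ℝ) (hw : ∀ i k, 0 < w i k)
    (lam : Fin N → E → K → ℝ)
    (R : Fin N → E → E → K → ℝ) (hR : ∀ t i j k, 0 ≤ R t i j k)
    (x0 : E → K → ℝ) :
    Convex ℝ {p : (Fin (N + 1) → E → K → ℝ) × (Fin N → E → K → ℝ) ×
        (Fin N → E → E → K → ℝ) |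
      p.1 0 = x0 ∧
      (∀ (t : Fin N) i k, p.1 t.succ i k =
        p.1 t.castSucc i k + h * (lam t i k + (∑ j, p.2.2 t j i k) - p.2.1 t i k)) ∧
      (∀ t i k, 0 ≤ p.1 t i k) ∧
      (∀ (t : Fin N) i k, 0 ≤ p.2.1 t i k ∧ p.2.1 t i k ≤ d i k (p.1 t.castSucc i k)) ∧
      (∀ (t : Fin N) i, (∑ k, ∑ j, p.2.2 t j i k) ≤
        s i (∑ k, w i k * p.1 t.castSucc i k)) ∧
      (∀ (t : Fin N) i j k, p.2.2 t i j k = R t i j k * p.2.1 t i k) ∧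
      (∀ (t : Fin N) i j k, 0 ≤ p.2.2 t i j k)} :=
  discrete_relaxed_feasible_set_convex_general E K N h d hd s hs w hw lam R x0
end

section
/- Let E (cells) and K (commodities) be finite types, let R : E → E → K → ℝ with R i j k ≥ 0 be turning ratios, let D : E → K → ℝ with D i k ≥ 0 be the (controlled) demand values of each commodity in each cell, and let s : E → ℝ with s j ≥ 0 be the supply values. For each i ∈ E define the FIFO coefficient γ i = sSup { γ ∈ ℝ : 0 ≤ γ ∧ γ ≤ 1 ∧ ∀ j ∈ E, (∃ k ∈ K, R i j k > 0) → γ · (Σ_{k ∈ K} Σ_{h ∈ E} R h j k · D h k) ≤ s j }, and define the flows f i j k = γ i · R i j k · D i k. Then the total inflow to every cell respects its supply: for every j ∈ E, Σ_{k ∈ K} Σ_{i ∈ E} f i j k ≤ s j. -/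
/-!
The flow into `j` is `∑ i, γ i * a i` with `a i = ∑ k, R i j k * D i k ≥ 0`, a weighted sum
whose weights add up to the aggregate demand `T = ∑ i, a i` directed to `j`. Every cell `i` with
`a i > 0` has `j` downstream, so every admissible `g` for `i` satisfies `g * T ≤ s j`, hence so does
the supremum `γ i` (also when no `g` is admissible: `sSup ∅ = 0` and `s j ≥ 0`). Multiplying the flow by `T` then bounds it by `s j * T`.
-/

open Finset

theorem Real.sSup_mul_le_of_forall_mul_le {S : Set ℝ} {T c : ℝ} (hT : 0 ≤ T) (hc : 0 ≤ c)
    (hS : ∀ g ∈ S, g * T ≤ c) : sSup S * T ≤ c := by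
  rw [mul_comm, ← smul_eq_mul, ← Real.sSup_smul_of_nonneg hT]
  refine Real.sSup_le ?_ hc
  rintro _ ⟨g, hg, rfl⟩
  simpa [mul_comm] using hS g hg

theorem Finset.sum_mul_le_of_mul_sum_le {ι : Type*} (s : Finset ι) {a x : ι → ℝ} {c : ℝ}
    (ha : ∀ i ∈ s, 0 ≤ a i) (hc : 0 ≤ c) (hx : ∀ i ∈ s, 0 < a i → x i * ∑ j ∈ s, a j ≤ c) :
    ∑ i ∈ s, x i * a i ≤ c := by
  set T := ∑ j ∈ s, a j
  have hterm : ∀ i ∈ s, (x i * T) * a i ≤ c * a i := by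
    intro i hi
    rcases (ha i hi).eq_or_lt with hai | hai
    · simp [← hai]
    · exact mul_le_mul_of_nonneg_right (hx i hi hai) hai.le
  rcases (sum_nonneg ha).eq_or_lt with hT | hT
  · have hzero : ∀ i ∈ s, a i = 0 := (sum_eq_zero_iff_of_nonneg ha).mp hT.symm
    rw [sum_eq_zero fun i hi => by rw [hzero i hi, mul_zero]]
    exact hc
  · refine le_of_mul_le_mul_left ?_ hT
    calc T * ∑ i ∈ s, x i * a i = ∑ i ∈ s, (x i * T) * a i := by
          rw [mul_sum]; exact sum_congr rfl fun i _ => by ring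
      _ ≤ ∑ i ∈ s, c * a i := sum_le_sum hterm
      _ = T * c := by rw [← mul_sum, mul_comm]

theorem Finset.exists_pos_left_of_sum_mul_pos {ι : Type*} {s : Finset ι} {r d : ι → ℝ}
    (hd : ∀ i ∈ s, 0 ≤ d i) (h : 0 < ∑ i ∈ s, r i * d i) : ∃ i ∈ s, 0 < r i := by
  obtain ⟨i, hi, hpos⟩ := exists_lt_of_sum_lt (by simpa using h : ∑ i ∈ s, (0 : ℝ) < _)
  exact ⟨i, hi, pos_of_mul_pos_left hpos (hd i hi)⟩

/-- Under the FIFO allocation rule, the flows `f i j k = γ i * R i j k * D i k`,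
where `γ i` is the largest `γ ∈ [0,1]` such that `γ` times the aggregate demand
directed to every downstream cell `j` of `i` does not exceed the supply `s j`,
respect the supply of every cell: `∑ k ∑ i, f i j k ≤ s j`. -/
theorem fifo_flows_respect_supply
    (E K : Type*) [Fintype E] [Fintype K]
    (R : E → E → K → ℝ) (hR : ∀ i j k, 0 ≤ R i j k)
    (D : E → K → ℝ) (hD : ∀ i k, 0 ≤ D i k)
    (s : E → ℝ) (hs : ∀ j, 0 ≤ s j)
    (γ : E → ℝ)
    (hγ : ∀ i, γ i = sSup {g : ℝ | 0 ≤ g ∧ g ≤ 1 ∧ ∀ j, (∃ k, 0 < R i j k) →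
      g * (∑ k, ∑ h, R h j k * D h k) ≤ s j})
    (f : E → E → K → ℝ)
    (hf : ∀ i j k, f i j k = γ i * (R i j k * D i k)) :
    ∀ j, (∑ k, ∑ i, f i j k) ≤ s j := by
  intro j
  have hflow : ∑ k, ∑ i, f i j k = ∑ i, γ i * ∑ k, R i j k * D i k := by
    rw [sum_comm]
    simp only [hf, mul_sum]
  have hdemand : ∑ k, ∑ h, R h j k * D h k = ∑ i, ∑ k, R i j k * D i k := sum_comm
  have hdemand_nonneg : ∀ i, 0 ≤ ∑ k, R i j k * D i k :=
    fun i => sum_nonneg fun k _ => mul_nonneg (hR i j k) (hD i k)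
  rw [hflow]
  refine sum_mul_le_of_mul_sum_le _ (fun i _ => hdemand_nonneg i) (hs j) ?_
  intro i _ hpos
  obtain ⟨k, -, hk⟩ := exists_pos_left_of_sum_mul_pos (fun k _ => hD i k) hpos
  rw [← hdemand, hγ i]
  exact Real.sSup_mul_le_of_forall_mul_le (hdemand ▸ sum_nonneg fun i _ => hdemand_nonneg i)
    (hs j) fun g hg => hg.2.2 j ⟨k, hk⟩
end

section
/- Let E and K be finite types, N ∈ ℕ a horizon, h > 0 a step size, v i k > 0 free-flow speeds, L i > 0 cell lengths, and suppose the CFL condition h ≤ L i / v i k holds for all i ∈ E, k ∈ K. Let x : Fin (N+1) → E → K → ℝ, z : Fin N → E → K → ℝ, and g : Fin N → E → K → ℝ satisfy, for all t, i, k: x (t+1) i k = x t i k + h · (g t i k − z t i k), where g t i k ≥ 0 (total inflow including the exogenous inflow) and 0 ≤ z t i k ≤ (v i k / L i) · x t i k. If x 0 i k ≥ 0 for all i, k, then x t i k ≥ 0 for all t ∈ Fin (N+1), i ∈ E, k ∈ K. -/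
/-!
Under the CFL condition a cell can lose at most its current content in one step:
`h * z ≤ h * (v / L) * x ≤ x`. Since inflows are nonnegative, nonnegativity propagates
from `x 0` to every time by induction.
-/

lemma mul_le_of_le_inv_of_le_mul {h z x r : ℝ} (hh : 0 ≤ h) (hr : 0 < r) (hx : 0 ≤ x)
    (hhr : h ≤ r⁻¹) (hz : z ≤ r * x) : h * z ≤ x :=
  calc h * z ≤ h * (r * x) := mul_le_mul_of_nonneg_left hz hh
    _ ≤ r⁻¹ * (r * x) := mul_le_mul_of_nonneg_right hhr (by positivity)
    _ = x := inv_mul_cancel_left₀ hr.ne' x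

lemma add_mul_sub_nonneg {h g z x : ℝ} (hh : 0 ≤ h) (hg : 0 ≤ g) (hout : h * z ≤ x) :
    0 ≤ x + h * (g - z) := by
  rw [mul_sub]
  linarith [mul_nonneg hh hg]

theorem discrete_nonneg_invariance_general
    (E K : Type*) (N : ℕ)
    (h : ℝ) (hh : 0 < h)
    (v : E → K → ℝ) (hv : ∀ i k, 0 < v i k)
    (L : E → ℝ) (hL : ∀ i, 0 < L i)
    (hCFL : ∀ i k, h ≤ L i / v i k)
    (x : Fin (N + 1) → E → K → ℝ) (z g : Fin N → E → K → ℝ)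
    (hupd : ∀ (t : Fin N) i k,
      x t.succ i k = x t.castSucc i k + h * (g t i k - z t i k))
    (hg : ∀ t i k, 0 ≤ g t i k)
    (hz : ∀ (t : Fin N) i k,
      0 ≤ z t i k ∧ z t i k ≤ (v i k / L i) * x t.castSucc i k)
    (hx0 : ∀ i k, 0 ≤ x 0 i k) :
    ∀ t i k, 0 ≤ x t i k := by
  intro t
  induction t using Fin.induction with
  | zero => exact hx0
  | succ t ih =>
    intro i k
    have hout : h * z t i k ≤ x t.castSucc i k :=
      mul_le_of_le_inv_of_le_mul hh.le (div_pos (hv i k) (hL i)) (ih i k)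
        (by rw [inv_div]; exact hCFL i k) (hz t i k).2
    rw [hupd]
    exact add_mul_sub_nonneg hh.le (hg t i k) hout

/-- Forward invariance of the nonnegative orthant for the discrete-time
multi-commodity CTM with linear demands `d i k (x) = (v i k / L i) * x` under
the CFL condition `h ≤ L i / v i k`: if the state starts nonnegative, it stays
nonnegative. -/
theorem discrete_nonneg_invariance
    (E K : Type*) [Fintype E] [Fintype K] (N : ℕ)
    (h : ℝ) (hh : 0 < h)
    (v : E → K → ℝ) (hv : ∀ i k, 0 < v i k)
    (L : E → ℝ) (hL : ∀ i, 0 < L i)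
    (hCFL : ∀ i k, h ≤ L i / v i k)
    (x : Fin (N + 1) → E → K → ℝ) (z g : Fin N → E → K → ℝ)
    (hupd : ∀ (t : Fin N) i k,
      x t.succ i k = x t.castSucc i k + h * (g t i k - z t i k))
    (hg : ∀ t i k, 0 ≤ g t i k)
    (hz : ∀ (t : Fin N) i k,
      0 ≤ z t i k ∧ z t i k ≤ (v i k / L i) * x t.castSucc i k)
    (hx0 : ∀ i k, 0 ≤ x 0 i k) :
    ∀ t i k, 0 ≤ x t i k :=
  discrete_nonneg_invariance_general E K N h hh v hv L hL hCFL x z g hupd hg hz hx0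
end

section
/- Let E and K be finite types, N ∈ ℕ, h > 0. Let d i k : ℝ → ℝ satisfy d i k (0) = 0 and d i k (y) ≥ 0 for y ≥ 0, let s i : ℝ → ℝ, w i k > 0, R : Fin N → E → E → K → ℝ nonnegative, λ : Fin N → E → K → ℝ, and x⁰ : E → K → ℝ. Suppose (x̄, z̄, f̄) is feasible for the discrete-time relaxed MC-FNC problem, i.e., x̄ 0 = x⁰; x̄ (t+1) i k = x̄ t i k + h·(λ t i k + Σ_j f̄ t j i k − z̄ t i k); 0 ≤ x̄ t i k; 0 ≤ z̄ t i k ≤ d i k (x̄ t i k); Σ_{k} Σ_{j} f̄ t j i k ≤ s i (Σ_{k} w i k · x̄ t i k); f̄ t i j k = R t i j k · z̄ t i k; f̄ t i j k ≥ 0, for all t, i, j, k. Define α t i k = if d i k (x̄ t i k) = 0 then 1 else z̄ t i k / d i k (x̄ t i k), and γ t i = sSup { γ ∈ [0,1] : ∀ j ∈ E, (∃ k, R t i j k > 0) → γ · Σ_{k ∈ K} Σ_{h' ∈ E} R t h' j k · α t h' k · d h' k (x̄ t h' k) ≤ s j (Σ_{k ∈ K} w j k · x̄ t j k) }. Then for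 all t, i, k: 0 ≤ α t i k ≤ 1, γ t i = 1, and z̄ t i k = γ t i · α t i k · d i k (x̄ t i k); hence (x̄, z̄, f̄) is a trajectory of the controlled FIFO dynamics with control parameters α. -/
/-! A relaxed feasible point already meets its demand bounds, so the control
`α = z̄ / d` lies in `[0,1]` and reproduces `z̄ = α d`. The controlled demand sent
to a cell `j` is then exactly the relaxed inflow `∑ f̄ · j ·`, which respects the
supply of `j`; hence `γ = 1` is admissible and, being the largest candidate,
is the supremum. -/

section RatioOrOne

variable {𝕜 : Type*} [Field 𝕜] [LinearOrder 𝕜]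

def ratioOrOne (z D : 𝕜) : 𝕜 := if D = 0 then 1 else z / D

theorem ratioOrOne_mem_Icc [IsStrictOrderedRing 𝕜] {z D : 𝕜} (hz : 0 ≤ z) (hzD : z ≤ D) :
    ratioOrOne z D ∈ Set.Icc 0 1 := by
  unfold ratioOrOne
  split_ifs with hD
  · exact ⟨zero_le_one, le_rfl⟩
  · have hD_pos : 0 < D := lt_of_le_of_ne (hz.trans hzD) (Ne.symm hD)
    exact ⟨div_nonneg hz hD_pos.le, (div_le_one hD_pos).2 hzD⟩

theorem ratioOrOne_mul_self {z D : 𝕜} (hz : 0 ≤ z) (hzD : z ≤ D) :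
    ratioOrOne z D * D = z := by
  unfold ratioOrOne
  split_ifs with hD
  · subst hD
    rw [mul_zero]
    exact (le_antisymm hzD hz).symm
  · exact div_mul_cancel₀ z hD

end RatioOrOne

theorem tightness_reconstruction_general
    (E K : Type*) [Fintype E] [Fintype K] (N : ℕ)
    (d : E → K → ℝ → ℝ)
    (s : E → ℝ → ℝ)
    (w : E → K → ℝ)
    (R : Fin N → E → E → K → ℝ)
    (xb : Fin (N + 1) → E → K → ℝ) (zb : Fin N → E → K → ℝ)
    (fb : Fin N → E → E → K → ℝ)
    (hzd : ∀ (t : Fin N) i k,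
      0 ≤ zb t i k ∧ zb t i k ≤ d i k (xb t.castSucc i k))
    (hsup : ∀ (t : Fin N) i,
      (∑ k, ∑ j, fb t j i k) ≤ s i (∑ k, w i k * xb t.castSucc i k))
    (hfR : ∀ (t : Fin N) i j k, fb t i j k = R t i j k * zb t i k)
    (α : Fin N → E → K → ℝ)
    (hα : ∀ (t : Fin N) i k, α t i k =
      if d i k (xb t.castSucc i k) = 0 then 1
      else zb t i k / d i k (xb t.castSucc i k))
    (γ : Fin N → E → ℝ)
    (hγ : ∀ (t : Fin N) i, γ t i =
      sSup {g : ℝ | 0 ≤ g ∧ g ≤ 1 ∧ ∀ j, (∃ k, 0 < R t i j k) →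
        g * (∑ k, ∑ h', R t h' j k * (α t h' k * d h' k (xb t.castSucc h' k)))
          ≤ s j (∑ k, w j k * xb t.castSucc j k)}) :
    ∀ (t : Fin N) i k, (0 ≤ α t i k ∧ α t i k ≤ 1) ∧ γ t i = 1 ∧
      zb t i k = γ t i * (α t i k * d i k (xb t.castSucc i k)) := by
  have hα_mem : ∀ t i k, α t i k ∈ Set.Icc 0 1 := fun t i k => by
    rw [hα]
    exact ratioOrOne_mem_Icc (hzd t i k).1 (hzd t i k).2
  have hz_eq : ∀ t i k, zb t i k = α t i k * d i k (xb t.castSucc i k) := fun t i k => by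
    rw [hα]
    exact (ratioOrOne_mul_self (hzd t i k).1 (hzd t i k).2).symm
  have hγ_one : ∀ t i, γ t i = 1 := fun t i => by
    rw [hγ]
    refine IsGreatest.csSup_eq ⟨⟨zero_le_one, le_rfl, fun j _ => ?_⟩, fun g hg => hg.2.1⟩
    simp_rw [one_mul, ← hz_eq, ← hfR]
    exact hsup t j
  intro t i k
  exact ⟨hα_mem t i k, hγ_one t i, by rw [hγ_one, one_mul, hz_eq]⟩

/-- Tightness of the discrete-time relaxation: given a feasible point
`(x̄, z̄, f̄)` of the relaxed MC-FNC problem, the reconstructed controls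
`α t i k = z̄ t i k / d i k (x̄ t i k)` (with the convention `α = 1` when the
demand vanishes) lie in `[0,1]`, the FIFO coefficients equal `1`, and
`z̄ t i k = γ t i * α t i k * d i k (x̄ t i k)`, so `(x̄, z̄, f̄)` is a trajectory
of the controlled FIFO dynamics with controls `α`. -/
theorem tightness_reconstruction
    (E K : Type*) [Fintype E] [Fintype K] (N : ℕ)
    (h : ℝ) (hh : 0 < h)
    (d : E → K → ℝ → ℝ) (hd0 : ∀ i k, d i k 0 = 0)
    (hdpos : ∀ i k (y : ℝ), 0 ≤ y → 0 ≤ d i k y)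
    (s : E → ℝ → ℝ)
    (w : E → K → ℝ) (hw : ∀ i k, 0 < w i k)
    (R : Fin N → E → E → K → ℝ) (hR : ∀ t i j k, 0 ≤ R t i j k)
    (lam : Fin N → E → K → ℝ) (x0 : E → K → ℝ)
    (xb : Fin (N + 1) → E → K → ℝ) (zb : Fin N → E → K → ℝ)
    (fb : Fin N → E → E → K → ℝ)
    (hinit : xb 0 = x0)
    (hupd : ∀ (t : Fin N) i k, xb t.succ i k = xb t.castSucc i k +
      h * (lam t i k + (∑ j, fb t j i k) - zb t i k))
    (hxnn : ∀ t i k, 0 ≤ xb t i k)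
    (hzd : ∀ (t : Fin N) i k,
      0 ≤ zb t i k ∧ zb t i k ≤ d i k (xb t.castSucc i k))
    (hsup : ∀ (t : Fin N) i,
      (∑ k, ∑ j, fb t j i k) ≤ s i (∑ k, w i k * xb t.castSucc i k))
    (hfR : ∀ (t : Fin N) i j k, fb t i j k = R t i j k * zb t i k)
    (hfnn : ∀ (t : Fin N) i j k, 0 ≤ fb t i j k)
    (α : Fin N → E → K → ℝ)
    (hα : ∀ (t : Fin N) i k, α t i k =
      if d i k (xb t.castSucc i k) = 0 then 1
      else zb t i k / d i k (xb t.castSucc i k))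
    (γ : Fin N → E → ℝ)
    (hγ : ∀ (t : Fin N) i, γ t i =
      sSup {g : ℝ | 0 ≤ g ∧ g ≤ 1 ∧ ∀ j, (∃ k, 0 < R t i j k) →
        g * (∑ k, ∑ h', R t h' j k * (α t h' k * d h' k (xb t.castSucc h' k)))
          ≤ s j (∑ k, w j k * xb t.castSucc j k)}) :
    ∀ (t : Fin N) i k, (0 ≤ α t i k ∧ α t i k ≤ 1) ∧ γ t i = 1 ∧
      zb t i k = γ t i * (α t i k * d i k (xb t.castSucc i k)) :=
  tightness_reconstruction_general E K N d s w R xb zb fb hzd hsup hfR α hα γ hγ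
end

section
/- Let E and K be finite types, N ∈ ℕ, and let the data be: linear demand functions d i k (x) = (v i k / L i) · x with v i k > 0 and L i > 0; supply functions s i : ℝ → ℝ with s i (y) ≥ 0 for all y; weights w i k > 0; nonnegative turning ratios R : Fin N → E → E → K → ℝ; nonnegative exogenous inflows λ : Fin N → E → K → ℝ; a nonnegative initial condition x⁰; a step size h > 0 with h ≤ L i / v i k for all i, k; and convex cost functions φ i k : ℝ → ℝ. Then the infimum over all controls α : Fin N → E → K → ℝ with 0 ≤ α t i k ≤ 1 of the cost Σ_{t=1}^{N} Σ_{i,k} φ i k (x^α t i k), where x^α is the controlled FIFO trajectory generated by α, equals the infimum of Σ_{t=1}^{N} Σ_{i,k} φ i k (x̄ t i k) over all feasible points (x̄, z̄, f̄) of the discrete-time relaxed MC-FNC problem with the same data. -/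
/-!
Both infima are taken over the same set of costs. Along a FIFO trajectory the throttle `γ t i`
is the supremum of a closed set containing `0`, so it is attained: it lies in `[0,1]` and every
downstream supply constraint holds for it. With `0 ≤ z ≤ (v/L) x`, the CFL condition keeps the
densities nonnegative, and summing the throttled flows into a cell against the supply bound of
each upstream cell gives the relaxed supply constraint. Conversely, a relaxed feasible point is
the FIFO trajectory of the controls `α = z / ((v/L) x)` (with `γ = 1`), because the relaxed supply
constraint says that nothing needs to be throttled.
-/

open Finset

theorem sSup_mem_of_forall_mul_le {ι : Type*} (P : ι → Prop) (a b : ι → ℝ)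
    (hb : ∀ j, 0 ≤ b j) :
    sSup {g : ℝ | 0 ≤ g ∧ g ≤ 1 ∧ ∀ j, P j → g * a j ≤ b j} ∈
      {g : ℝ | 0 ≤ g ∧ g ≤ 1 ∧ ∀ j, P j → g * a j ≤ b j} := by
  have hclosed : IsClosed {g : ℝ | 0 ≤ g ∧ g ≤ 1 ∧ ∀ j, P j → g * a j ≤ b j} := by
    simp only [Set.ofPred_and, Set.ofPred_forall]
    refine (isClosed_le continuous_const continuous_id).inter
      ((isClosed_le continuous_id continuous_const).inter
        (isClosed_iInter fun j => isClosed_iInter fun _ => ?_))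
    exact isClosed_le (continuous_id.mul continuous_const) continuous_const
  refine hclosed.csSup_mem ⟨0, le_rfl, zero_le_one, fun j _ => ?_⟩ ⟨1, fun g hg => hg.2.1⟩
  rw [zero_mul]
  exact hb j

theorem exists_pos_of_sum_mul_ne_zero {ι : Type*} [Fintype ι] {r d : ι → ℝ}
    (hr : ∀ k, 0 ≤ r k) (hsum : ∑ k, r k * d k ≠ 0) : ∃ k, 0 < r k := by
  by_contra! hneg
  exact hsum (sum_eq_zero fun k _ => by rw [le_antisymm (hneg k) (hr k), zero_mul])

theorem sum_mul_le_of_mul_sum_le {ι : Type*} [Fintype ι] {γ c : ι → ℝ} {S : ℝ}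
    (hc : ∀ j, 0 ≤ c j) (hS : 0 ≤ S) (hγ : ∀ j, c j ≠ 0 → γ j * ∑ i, c i ≤ S) :
    ∑ j, γ j * c j ≤ S := by
  rcases (sum_nonneg fun j _ => hc j : 0 ≤ ∑ i, c i).eq_or_lt with hzero | hpos
  · have hc0 : ∀ j, c j = 0 := fun j =>
      (sum_eq_zero_iff_of_nonneg fun i _ => hc i).mp hzero.symm j (mem_univ j)
    simpa [hc0] using hS
  · have hγle : ∀ j, γ j * c j ≤ (S / ∑ i, c i) * c j := fun j => by
      rcases (hc j).eq_or_lt with hcj | hcj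
      · rw [← hcj, mul_zero, mul_zero]
      · exact mul_le_mul_of_nonneg_right ((le_div_iff₀ hpos).mpr (hγ j hcj.ne')) hcj.le
    calc ∑ j, γ j * c j ≤ ∑ j, (S / ∑ i, c i) * c j := sum_le_sum fun j _ => hγle j
      _ = S := by rw [← mul_sum, div_mul_cancel₀ _ hpos.ne']

theorem add_mul_sub_nonneg_of_cfl {x z c h l F : ℝ} (hx : 0 ≤ x) (hz : z ≤ c * x)
    (hcfl : h * c ≤ 1) (hh : 0 ≤ h) (hl : 0 ≤ l) (hF : 0 ≤ F) :
    0 ≤ x + h * (l + F - z) := by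
  nlinarith [mul_le_mul_of_nonneg_left hz hh, mul_le_mul_of_nonneg_right hcfl hx,
    mul_nonneg hh (add_nonneg hl hF)]

theorem mul_mem_Icc_of_mem_Icc {θ d : ℝ} (hθ : θ ∈ Set.Icc (0 : ℝ) 1) (hd : 0 ≤ d) :
    θ * d ∈ Set.Icc 0 d :=
  ⟨mul_nonneg hθ.1 hd, mul_le_of_le_one_left hd hθ.2⟩

theorem trajectory_nonneg_of_cfl {E K : Type*} [Fintype E] {N : ℕ} {c : E → K → ℝ}
    {R : Fin N → E → E → K → ℝ} {lam θ : Fin N → E → K → ℝ} {x0 : E → K → ℝ} {h : ℝ}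
    {x : Fin (N + 1) → E → K → ℝ} {z : Fin N → E → K → ℝ} {f : Fin N → E → E → K → ℝ}
    (hc : ∀ i k, 0 ≤ c i k) (hR : ∀ t i j k, 0 ≤ R t i j k) (hlam : ∀ t i k, 0 ≤ lam t i k)
    (hx0 : ∀ i k, 0 ≤ x0 i k) (hh : 0 ≤ h) (hcfl : ∀ i k, h * c i k ≤ 1)
    (hθ : ∀ t i k, θ t i k ∈ Set.Icc (0 : ℝ) 1) (hx0' : x 0 = x0)
    (hz : ∀ t i k, z t i k = θ t i k * (c i k * x t.castSucc i k))
    (hf : ∀ t i j k, f t i j k = R t i j k * z t i k)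
    (hx : ∀ t i k, x t.succ i k = x t.castSucc i k +
      h * (lam t i k + (∑ j, f t j i k) - z t i k)) :
    ∀ t i k, 0 ≤ x t i k := by
  intro t
  induction t using Fin.induction with
  | zero => simpa [hx0'] using hx0
  | succ t ih =>
    have hzI : ∀ i k, z t i k ∈ Set.Icc 0 (c i k * x t.castSucc i k) := fun i k =>
      hz t i k ▸ mul_mem_Icc_of_mem_Icc (hθ t i k) (mul_nonneg (hc i k) (ih i k))
    intro i k
    rw [hx t i k]
    refine add_mul_sub_nonneg_of_cfl (ih i k) (hzI i k).2 (hcfl i k) hh (hlam t i k)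
      (sum_nonneg fun j _ => ?_)
    rw [hf]
    exact mul_nonneg (hR t j i k) (hzI j k).1

theorem sum_throttled_inflow_le {E K : Type*} [Fintype E] [Fintype K] {R : E → E → K → ℝ}
    {D : E → K → ℝ} {γ S : E → ℝ} (hR : ∀ i j k, 0 ≤ R i j k) (hD : ∀ j k, 0 ≤ D j k)
    (hS : ∀ i, 0 ≤ S i)
    (hγ : ∀ i j, (∃ k, 0 < R i j k) → γ i * ∑ k, ∑ h', R h' j k * D h' k ≤ S j) (i : E) :
    ∑ k, ∑ j, R j i k * (γ j * D j k) ≤ S i := by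
  have hregroup : ∑ k, ∑ j, R j i k * (γ j * D j k) = ∑ j, γ j * ∑ k, R j i k * D j k := by
    rw [sum_comm]
    simp only [mul_sum]
    exact sum_congr rfl fun j _ => sum_congr rfl fun k _ => by ring
  rw [hregroup]
  refine sum_mul_le_of_mul_sum_le (fun j => sum_nonneg fun k _ => mul_nonneg (hR j i k) (hD j k))
    (hS i) fun j hj => ?_
  rw [sum_comm]
  exact hγ j i (exists_pos_of_sum_mul_ne_zero (hR j i) hj)

section CostSets

variable (E K : Type*) [Fintype E] [Fintype K] (N : ℕ) (v : E → K → ℝ) (L : E → ℝ)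
  (s : E → ℝ → ℝ) (w : E → K → ℝ) (R : Fin N → E → E → K → ℝ) (lam : Fin N → E → K → ℝ)
  (x0 : E → K → ℝ) (h : ℝ) (φ : E → K → ℝ → ℝ)

def fifoCostSet : Set ℝ :=
  {c : ℝ | ∃ (α : Fin N → E → K → ℝ) (x : Fin (N + 1) → E → K → ℝ)
        (z : Fin N → E → K → ℝ) (f : Fin N → E → E → K → ℝ)
        (γ : Fin N → E → ℝ),
      (∀ t i k, 0 ≤ α t i k ∧ α t i k ≤ 1) ∧
      x 0 = x0 ∧
      (∀ (t : Fin N) i, γ t i =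
        sSup {g : ℝ | 0 ≤ g ∧ g ≤ 1 ∧ ∀ j, (∃ k, 0 < R t i j k) →
          g * (∑ k, ∑ h', R t h' j k *
              (α t h' k * ((v h' k / L h') * x t.castSucc h' k)))
            ≤ s j (∑ k, w j k * x t.castSucc j k)}) ∧
      (∀ (t : Fin N) i k,
        z t i k = γ t i * (α t i k * ((v i k / L i) * x t.castSucc i k))) ∧
      (∀ (t : Fin N) i j k, f t i j k = R t i j k * z t i k) ∧
      (∀ (t : Fin N) i k, x t.succ i k = x t.castSucc i k +
        h * (lam t i k + (∑ j, f t j i k) - z t i k)) ∧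
      c = ∑ t : Fin N, ∑ i, ∑ k, φ i k (x t.succ i k)}

def relaxedCostSet : Set ℝ :=
  {c : ℝ | ∃ (x : Fin (N + 1) → E → K → ℝ)
        (z : Fin N → E → K → ℝ) (f : Fin N → E → E → K → ℝ),
      x 0 = x0 ∧
      (∀ (t : Fin N) i k, x t.succ i k = x t.castSucc i k +
        h * (lam t i k + (∑ j, f t j i k) - z t i k)) ∧
      (∀ t i k, 0 ≤ x t i k) ∧
      (∀ (t : Fin N) i k,
        0 ≤ z t i k ∧ z t i k ≤ (v i k / L i) * x t.castSucc i k) ∧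
      (∀ (t : Fin N) i,
        (∑ k, ∑ j, f t j i k) ≤ s i (∑ k, w i k * x t.castSucc i k)) ∧
      (∀ (t : Fin N) i j k, f t i j k = R t i j k * z t i k) ∧
      (∀ (t : Fin N) i j k, 0 ≤ f t i j k) ∧
      c = ∑ t : Fin N, ∑ i, ∑ k, φ i k (x t.succ i k)}

variable {E K N v L s w R lam x0 h φ}

theorem fifoCostSet_subset_relaxedCostSet (hv : ∀ i k, 0 < v i k) (hL : ∀ i, 0 < L i)
    (hs : ∀ i y, 0 ≤ s i y) (hR : ∀ t i j k, 0 ≤ R t i j k) (hlam : ∀ t i k, 0 ≤ lam t i k)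
    (hx0 : ∀ i k, 0 ≤ x0 i k) (hh : 0 ≤ h) (hCFL : ∀ i k, h ≤ L i / v i k) :
    fifoCostSet E K N v L s w R lam x0 h φ ⊆ relaxedCostSet E K N v L s w R lam x0 h φ := by
  rintro _ ⟨α, x, z, f, γ, hα, hx0', hγ, hz, hf, hx, rfl⟩
  have hγmem : ∀ t i, γ t i ∈ {g : ℝ | 0 ≤ g ∧ g ≤ 1 ∧ ∀ j, (∃ k, 0 < R t i j k) →
      g * (∑ k, ∑ h', R t h' j k * (α t h' k * ((v h' k / L h') * x t.castSucc h' k)))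
        ≤ s j (∑ k, w j k * x t.castSucc j k)} := fun t i => by
    rw [hγ t i]
    exact sSup_mem_of_forall_mul_le _ _ _ fun j => hs j _
  have hrate : ∀ i k, 0 ≤ v i k / L i := fun i k => div_nonneg (hv i k).le (hL i).le
  have hcfl : ∀ i k, h * (v i k / L i) ≤ 1 := fun i k => by
    rw [← mul_div_assoc, div_le_one (hL i)]
    exact (le_div_iff₀ (hv i k)).mp (hCFL i k)
  have hθ : ∀ t i k, γ t i * α t i k ∈ Set.Icc (0 : ℝ) 1 := fun t i k =>
    ⟨mul_nonneg (hγmem t i).1 (hα t i k).1, mul_le_one₀ (hγmem t i).2.1 (hα t i k).1 (hα t i k).2⟩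
  have hz' : ∀ t i k, z t i k = γ t i * α t i k * (v i k / L i * x t.castSucc i k) :=
    fun t i k => by rw [hz, mul_assoc]
  have hxnn := trajectory_nonneg_of_cfl hrate hR hlam hx0 hh hcfl hθ hx0' hz' hf hx
  have hzI : ∀ t i k, z t i k ∈ Set.Icc 0 (v i k / L i * x t.castSucc i k) := fun t i k =>
    hz' t i k ▸ mul_mem_Icc_of_mem_Icc (hθ t i k) (mul_nonneg (hrate i k) (hxnn _ i k))
  refine ⟨x, z, f, hx0', hx, hxnn, hzI, fun t i => ?_, hf, fun t i j k => ?_, rfl⟩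
  · simp only [hf, hz]
    exact sum_throttled_inflow_le (hR t)
      (fun j k => mul_nonneg (hα t j k).1 (mul_nonneg (hrate j k) (hxnn _ j k)))
      (fun j => hs j _) (fun i j => (hγmem t i).2.2 j) i
  · rw [hf]
    exact mul_nonneg (hR t i j k) (hzI t i k).1

theorem relaxedCostSet_subset_fifoCostSet :
    relaxedCostSet E K N v L s w R lam x0 h φ ⊆ fifoCostSet E K N v L s w R lam x0 h φ := by
  rintro _ ⟨x, z, f, hx0', hx, -, hz, hsup, hf, -, rfl⟩
  have hd : ∀ (t : Fin N) i k, 0 ≤ v i k / L i * x t.castSucc i k := fun t i k =>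
    (hz t i k).1.trans (hz t i k).2
  -- where the demand vanishes, so does `z`, and `z / 0 = 0` is a harmless control
  have hcancel : ∀ (t : Fin N) i k,
      z t i k / (v i k / L i * x t.castSucc i k) * (v i k / L i * x t.castSucc i k) = z t i k :=
    fun t i k => div_mul_cancel_of_imp fun h0 => le_antisymm (h0 ▸ (hz t i k).2) (hz t i k).1
  refine ⟨fun t i k => z t i k / (v i k / L i * x t.castSucc i k), x, z, f, fun _ _ => 1,
    fun t i k => ⟨div_nonneg (hz t i k).1 (hd t i k), div_le_one_of_le₀ (hz t i k).2 (hd t i k)⟩,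
    hx0', fun t i => ?_, fun t i k => by rw [one_mul, hcancel], hf, hx, rfl⟩
  refine Eq.symm (IsGreatest.csSup_eq ⟨⟨zero_le_one, le_rfl, fun j _ => ?_⟩, fun g hg => hg.2.1⟩)
  simp only [one_mul, hcancel, ← hf]
  exact hsup t j

end CostSets

theorem relaxation_no_gap_general
    (E K : Type*) [Fintype E] [Fintype K] (N : ℕ)
    (v : E → K → ℝ) (hv : ∀ i k, 0 < v i k)
    (L : E → ℝ) (hL : ∀ i, 0 < L i)
    (s : E → ℝ → ℝ) (hs : ∀ i y, 0 ≤ s i y)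
    (w : E → K → ℝ)
    (R : Fin N → E → E → K → ℝ) (hR : ∀ t i j k, 0 ≤ R t i j k)
    (lam : Fin N → E → K → ℝ) (hlam : ∀ t i k, 0 ≤ lam t i k)
    (x0 : E → K → ℝ) (hx0 : ∀ i k, 0 ≤ x0 i k)
    (h : ℝ) (hh : 0 < h) (hCFL : ∀ i k, h ≤ L i / v i k)
    (φ : E → K → ℝ → ℝ) :
    sInf {c : ℝ | ∃ (α : Fin N → E → K → ℝ) (x : Fin (N + 1) → E → K → ℝ)
        (z : Fin N → E → K → ℝ) (f : Fin N → E → E → K → ℝ)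
        (γ : Fin N → E → ℝ),
      (∀ t i k, 0 ≤ α t i k ∧ α t i k ≤ 1) ∧
      x 0 = x0 ∧
      (∀ (t : Fin N) i, γ t i =
        sSup {g : ℝ | 0 ≤ g ∧ g ≤ 1 ∧ ∀ j, (∃ k, 0 < R t i j k) →
          g * (∑ k, ∑ h', R t h' j k *
              (α t h' k * ((v h' k / L h') * x t.castSucc h' k)))
            ≤ s j (∑ k, w j k * x t.castSucc j k)}) ∧
      (∀ (t : Fin N) i k,
        z t i k = γ t i * (α t i k * ((v i k / L i) * x t.castSucc i k))) ∧
      (∀ (t : Fin N) i j k, f t i j k = R t i j k * z t i k) ∧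
      (∀ (t : Fin N) i k, x t.succ i k = x t.castSucc i k +
        h * (lam t i k + (∑ j, f t j i k) - z t i k)) ∧
      c = ∑ t : Fin N, ∑ i, ∑ k, φ i k (x t.succ i k)}
    = sInf {c : ℝ | ∃ (x : Fin (N + 1) → E → K → ℝ)
        (z : Fin N → E → K → ℝ) (f : Fin N → E → E → K → ℝ),
      x 0 = x0 ∧
      (∀ (t : Fin N) i k, x t.succ i k = x t.castSucc i k +
        h * (lam t i k + (∑ j, f t j i k) - z t i k)) ∧
      (∀ t i k, 0 ≤ x t i k) ∧
      (∀ (t : Fin N) i k,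
        0 ≤ z t i k ∧ z t i k ≤ (v i k / L i) * x t.castSucc i k) ∧
      (∀ (t : Fin N) i,
        (∑ k, ∑ j, f t j i k) ≤ s i (∑ k, w i k * x t.castSucc i k)) ∧
      (∀ (t : Fin N) i j k, f t i j k = R t i j k * z t i k) ∧
      (∀ (t : Fin N) i j k, 0 ≤ f t i j k) ∧
      c = ∑ t : Fin N, ∑ i, ∑ k, φ i k (x t.succ i k)} :=
  congrArg sInf <| (fifoCostSet_subset_relaxedCostSet hv hL hs hR hlam hx0 hh.le hCFL).antisymm
    relaxedCostSet_subset_fifoCostSet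

/-- No relaxation gap: the infimum of the convex separable cost over all
controlled FIFO trajectories generated by controls `α ∈ [0,1]` equals the
infimum of the same cost over all feasible points of the discrete-time relaxed
MC-FNC problem (linear demands `d i k (x) = (v i k / L i) * x`, nonnegative
supplies, CFL condition `h ≤ L i / v i k`). -/
theorem relaxation_no_gap
    (E K : Type*) [Fintype E] [Fintype K] (N : ℕ)
    (v : E → K → ℝ) (hv : ∀ i k, 0 < v i k)
    (L : E → ℝ) (hL : ∀ i, 0 < L i)
    (s : E → ℝ → ℝ) (hs : ∀ i y, 0 ≤ s i y)
    (w : E → K → ℝ) (hw : ∀ i k, 0 < w i k)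
    (R : Fin N → E → E → K → ℝ) (hR : ∀ t i j k, 0 ≤ R t i j k)
    (lam : Fin N → E → K → ℝ) (hlam : ∀ t i k, 0 ≤ lam t i k)
    (x0 : E → K → ℝ) (hx0 : ∀ i k, 0 ≤ x0 i k)
    (h : ℝ) (hh : 0 < h) (hCFL : ∀ i k, h ≤ L i / v i k)
    (φ : E → K → ℝ → ℝ) (hφ : ∀ i k, ConvexOn ℝ Set.univ (φ i k)) :
    sInf {c : ℝ | ∃ (α : Fin N → E → K → ℝ) (x : Fin (N + 1) → E → K → ℝ)
        (z : Fin N → E → K → ℝ) (f : Fin N → E → E → K → ℝ)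
        (γ : Fin N → E → ℝ),
      (∀ t i k, 0 ≤ α t i k ∧ α t i k ≤ 1) ∧
      x 0 = x0 ∧
      (∀ (t : Fin N) i, γ t i =
        sSup {g : ℝ | 0 ≤ g ∧ g ≤ 1 ∧ ∀ j, (∃ k, 0 < R t i j k) →
          g * (∑ k, ∑ h', R t h' j k *
              (α t h' k * ((v h' k / L h') * x t.castSucc h' k)))
            ≤ s j (∑ k, w j k * x t.castSucc j k)}) ∧
      (∀ (t : Fin N) i k,
        z t i k = γ t i * (α t i k * ((v i k / L i) * x t.castSucc i k))) ∧
      (∀ (t : Fin N) i j k, f t i j k = R t i j k * z t i k) ∧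
      (∀ (t : Fin N) i k, x t.succ i k = x t.castSucc i k +
        h * (lam t i k + (∑ j, f t j i k) - z t i k)) ∧
      c = ∑ t : Fin N, ∑ i, ∑ k, φ i k (x t.succ i k)}
    = sInf {c : ℝ | ∃ (x : Fin (N + 1) → E → K → ℝ)
        (z : Fin N → E → K → ℝ) (f : Fin N → E → E → K → ℝ),
      x 0 = x0 ∧
      (∀ (t : Fin N) i k, x t.succ i k = x t.castSucc i k +
        h * (lam t i k + (∑ j, f t j i k) - z t i k)) ∧
      (∀ t i k, 0 ≤ x t i k) ∧
      (∀ (t : Fin N) i k,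
        0 ≤ z t i k ∧ z t i k ≤ (v i k / L i) * x t.castSucc i k) ∧
      (∀ (t : Fin N) i,
        (∑ k, ∑ j, f t j i k) ≤ s i (∑ k, w i k * x t.castSucc i k)) ∧
      (∀ (t : Fin N) i j k, f t i j k = R t i j k * z t i k) ∧
      (∀ (t : Fin N) i j k, 0 ≤ f t i j k) ∧
      c = ∑ t : Fin N, ∑ i, ∑ k, φ i k (x t.succ i k)} :=
  relaxation_no_gap_general E K N v hv L hL s hs w R hR lam hlam x0 hx0 h hh hCFL φ
end

section
/- Let ι be a finite type and let F : (ι → ℝ) → (ι → ℝ) be a Lipschitz-continuous vector field such that for every x in the nonnegative orthant (x i ≥ 0 for all i) and every index i with x i = 0, one has F x i ≥ 0. Let x : ℝ → (ι → ℝ) be a solution, i.e., for every t ≥ 0 and every i ∈ ι, the function t ↦ x t i has derivative (F (x t)) i at t. If x 0 i ≥ 0 for all i, then x t i ≥ 0 for all t ≥ 0 and all i ∈ ι. -/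
/-!
The total negative part `f t = ∑ i, (x t i)⁻` is the `ℓ¹` distance from `x t` to the orthant.
Where `x t i ≤ 0`, the projection `(x t)⁺` lies on the face `{y i = 0}`, on which `F` points
inward, so the Lipschitz bound gives `F (x t) i ≥ -c f t`. Hence the right upper Dini derivative
of `f` is at most `card ι * c * f`, and Grönwall's inequality with `f 0 = 0` forces `f = 0`.
-/

open Set Filter
open scoped Topology NNReal

theorem negPart_sub_negPart_le_negPart_sub {α : Type*} [Lattice α] [AddCommGroup α]
    [AddLeftMono α] (a b : α) : a⁻ - b⁻ ≤ (a - b)⁻ := by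
  rw [sub_le_iff_le_add, negPart_def a]
  refine sup_le ?_ (add_nonneg (negPart_nonneg _) (negPart_nonneg _))
  calc -a = -(a - b) + -b := by abel
    _ ≤ (a - b)⁻ + b⁻ := add_le_add (neg_le_negPart _) (neg_le_negPart _)

theorem slope_negPart_le_negPart_slope {u : ℝ → ℝ} {t z : ℝ} (hz : t < z) :
    slope (fun s => (u s)⁻) t z ≤ (slope u t z)⁻ := by
  have hdz : 0 ≤ (z - t)⁻¹ := inv_nonneg.2 (sub_pos.2 hz).le
  calc slope (fun s => (u s)⁻) t z = (z - t)⁻¹ * ((u z)⁻ - (u t)⁻) := rfl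
    _ ≤ (z - t)⁻¹ * (u z - u t)⁻ := by gcongr; exact negPart_sub_negPart_le_negPart_sub _ _
    _ = (slope u t z)⁻ := by
      rw [slope_def_module, smul_eq_mul, negPart_def, negPart_def, mul_max_of_nonneg _ _ hdz,
        mul_neg, mul_zero]

theorem HasDerivAt.eventually_slope_negPart_lt {u : ℝ → ℝ} {u' t r : ℝ}
    (hu : HasDerivAt u u' t) (hr : u'⁻ < r) :
    ∀ᶠ z in 𝓝[>] t, slope (fun s => (u s)⁻) t z < r := by
  have hlim : Tendsto (fun z => (slope u t z)⁻) (𝓝[>] t) (𝓝 u'⁻) :=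
    (continuous_negPart.tendsto u').comp
      (hu.tendsto_slope.mono_left (nhdsWithin_mono t fun z hz => ne_of_gt hz))
  filter_upwards [hlim.eventually_lt_const hr, self_mem_nhdsWithin] with z hz htz
  exact (slope_negPart_le_negPart_slope htz).trans_lt hz

theorem ContinuousAt.eventually_slope_negPart_eq_zero {u : ℝ → ℝ} {t : ℝ}
    (hu : ContinuousAt u t) (ht : 0 < u t) :
    ∀ᶠ z in 𝓝[>] t, slope (fun s => (u s)⁻) t z = 0 := by
  filter_upwards [nhdsWithin_le_nhds (continuousAt_const.eventually_lt hu ht)] with z hz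
  simp [slope_def_module, negPart_eq_zero.2 hz.le, negPart_eq_zero.2 ht.le]

theorem slope_finsetSum {ι k E : Type*} [Field k] [AddCommGroup E] [Module k E] (s : Finset ι)
    (f : ι → k → E) (t z : k) :
    slope (fun y => ∑ i ∈ s, f i y) t z = ∑ i ∈ s, slope (f i) t z := by
  simp only [slope_def_module, ← Finset.sum_sub_distrib, Finset.smul_sum]

theorem eventually_slope_sum_negPart_lt {ι : Type*} [Fintype ι] {x : ℝ → ι → ℝ} {v : ι → ℝ}
    {t C r : ℝ} (hx : ∀ i, HasDerivAt (fun s => x s i) (v i) t)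
    (hv : ∀ i, x t i ≤ 0 → -C ≤ v i) (hC : 0 ≤ C) (hr : Fintype.card ι * C < r) :
    ∀ᶠ z in 𝓝[>] t, slope (fun s => ∑ i, (x s i)⁻) t z < r := by
  obtain ⟨ρ, hCρ, hρr⟩ : ∃ ρ, C < ρ ∧ Fintype.card ι * ρ < r :=
    (((continuous_const_mul _).tendsto C).eventually_lt_const hr).exists_gt
  have hcomp : ∀ i, ∀ᶠ z in 𝓝[>] t, slope (fun s => (x s i)⁻) t z < ρ := by
    intro i
    rcases lt_or_ge 0 (x t i) with hpos | hnonpos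
    · filter_upwards [(hx i).continuousAt.eventually_slope_negPart_eq_zero hpos] with z hz
      exact hz ▸ hC.trans_lt hCρ
    · have hvC : (v i)⁻ ≤ C := sup_le (by linarith [hv i hnonpos]) hC
      exact (hx i).eventually_slope_negPart_lt (hvC.trans_lt hCρ)
  filter_upwards [eventually_all.2 hcomp] with z hz
  calc slope (fun s => ∑ i, (x s i)⁻) t z = ∑ i, slope (fun s => (x s i)⁻) t z :=
        slope_finsetSum _ _ t z
    _ ≤ ∑ _i : ι, ρ := Finset.sum_le_sum fun i _ => (hz i).le
    _ = Fintype.card ι * ρ := by simp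
    _ < r := hρr

theorem dist_posPart_le_sum_negPart {ι : Type*} [Fintype ι] (x : ι → ℝ) :
    dist x x⁺ ≤ ∑ i, (x i)⁻ := by
  refine (dist_pi_le_iff (Finset.sum_nonneg fun i _ => negPart_nonneg _)).2 fun i => ?_
  calc dist (x i) ((x i)⁺) = (x i)⁻ := by
        nth_rw 1 [Real.dist_eq, ← posPart_sub_negPart (x i)]
        rw [sub_sub_cancel_left, abs_neg, abs_of_nonneg (negPart_nonneg _)]
    _ ≤ ∑ j, (x j)⁻ :=
        Finset.single_le_sum (fun j _ => negPart_nonneg (x j)) (Finset.mem_univ i)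

theorem LipschitzWith.neg_mul_sum_negPart_le_apply {ι : Type*} [Fintype ι]
    {F : (ι → ℝ) → ι → ℝ} {c : ℝ≥0} (hF : LipschitzWith c F)
    (hinward : ∀ y : ι → ℝ, (∀ i, 0 ≤ y i) → ∀ i, y i = 0 → 0 ≤ F y i)
    {x : ι → ℝ} {i : ι} (hxi : x i ≤ 0) :
    -(c * ∑ j, (x j)⁻) ≤ F x i := by
  have hboundary : 0 ≤ F x⁺ i :=
    hinward x⁺ (fun j => posPart_nonneg (x j)) i (posPart_eq_zero.2 hxi)
  have hclose : dist (F x i) (F x⁺ i) ≤ c * ∑ j, (x j)⁻ :=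
    calc dist (F x i) (F x⁺ i) ≤ dist (F x) (F x⁺) := dist_le_pi_dist _ _ i
      _ ≤ c * dist x x⁺ := hF.dist_le_mul _ _
      _ ≤ c * ∑ j, (x j)⁻ := by gcongr; exact dist_posPart_le_sum_negPart x
  rw [Real.dist_eq] at hclose
  linarith [(abs_le.1 hclose).1]

theorem nonpos_of_liminf_slope_right_le_mul {f : ℝ → ℝ} {K a : ℝ} (hf : ContinuousOn f (Ici a))
    (ha : f a ≤ 0) (hslope : ∀ t ≥ a, ∀ r, K * f t < r → ∃ᶠ z in 𝓝[>] t, slope f t z < r) :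
    ∀ t ≥ a, f t ≤ 0 := by
  intro t ht
  simpa only [gronwallBound_ε0_δ0] using
    le_gronwallBound_of_liminf_deriv_right_le (hf.mono Icc_subset_Ici_self)
      (fun s hs r hr => hslope s hs.1 r hr) ha (fun s _ => (add_zero (K * f s)).ge) t ⟨ht, le_rfl⟩

/-- Forward invariance of the nonnegative orthant for a Lipschitz vector field
`F` that points inward on the boundary faces (`F x i ≥ 0` whenever `x ≥ 0` and
`x i = 0`): every solution starting in the orthant stays in the orthant. -/
theorem ode_nonneg_invariance
    (ι : Type*) [Fintype ι]
    (F : (ι → ℝ) → (ι → ℝ)) (c : NNReal) (hFlip : LipschitzWith c F)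
    (hF : ∀ x : ι → ℝ, (∀ i, 0 ≤ x i) → ∀ i, x i = 0 → 0 ≤ F x i)
    (x : ℝ → ι → ℝ)
    (hx : ∀ t ≥ (0 : ℝ), ∀ i, HasDerivAt (fun s => x s i) (F (x t) i) t)
    (hx0 : ∀ i, 0 ≤ x 0 i) :
    ∀ t ≥ (0 : ℝ), ∀ i, 0 ≤ x t i := by
  set f : ℝ → ℝ := fun t => ∑ i, (x t i)⁻
  have hf_cont : ContinuousOn f (Ici 0) := continuousOn_finsetSum _ fun i _ =>
    continuous_negPart.comp_continuousOn fun t ht => (hx t ht i).continuousAt.continuousWithinAt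
  have hf0 : f 0 ≤ 0 := by simp [f, negPart_eq_zero.2 (hx0 _)]
  have hf_slope : ∀ t ≥ 0, ∀ r, Fintype.card ι * c * f t < r →
      ∃ᶠ z in 𝓝[>] t, slope f t z < r := fun t ht r hr =>
    (eventually_slope_sum_negPart_lt (hx t ht)
      (fun i hi => hFlip.neg_mul_sum_negPart_le_apply hF hi) (by positivity)
      (by rwa [← mul_assoc])).frequently
  have hf_nonpos := nonpos_of_liminf_slope_right_le_mul hf_cont hf0 hf_slope
  intro t ht i
  exact negPart_nonpos.1 <|
    (Finset.single_le_sum (fun j _ => negPart_nonneg (x t j)) (Finset.mem_univ i)).trans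
      (hf_nonpos t ht)
end

section
/- Let E (cells) and K (commodities) be finite types, T > 0, d i k : ℝ → ℝ concave on [0,∞) for each i ∈ E, k ∈ K, s i : ℝ → ℝ concave on [0,∞) for each i ∈ E, w i k > 0 weights, R : ℝ → E → E → K → ℝ nonnegative turning ratios, and λ : ℝ → E → K → ℝ exogenous inflows. Consider the set T of triples of functions (x, z, f) with x : ℝ → E → K → ℝ, z : ℝ → E → K → ℝ, f : ℝ → E → E → K → ℝ such that for every t ∈ [0, T], i ∈ E, j ∈ E, k ∈ K: the map t ↦ x t i k has derivative λ t i k + Σ_{j' ∈ E} f t j' i k − z t i k at t; 0 ≤ x t i k; 0 ≤ z t i k ≤ d i k (x t i k); Σ_{k ∈ K} Σ_{j' ∈ E} f t j' i k ≤ s i (Σ_{k ∈ K} w i k · x t i k); f t i j k = R t i j k · z t i k; and f t i j k ≥ 0. Then T is a convex subset of the product function space: if (x⁰, z⁰, f⁰) and (x¹, z¹, f¹) belong to T and β ∈ [0,1], then ((1−β)x⁰+βx¹, (1−β)z⁰+βz¹, (1−β)f⁰+βf¹) belongs to T. -/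
/-!
Every constraint is either affine in `(x, z, f)` (the dynamics, the routing equalities,
nonnegativity) or states that a linear image of the triple lies in the hypograph of a concave
function, and hypographs of concave functions are convex. The positive weights keep the
weighted load `∑ k, w i k * x t i k` inside `[0, ∞)`, where `s i` is concave.
-/

open Finset

theorem Finset.sum_mul_add_mul {ι R : Type*} [NonUnitalNonAssocSemiring R] (s : Finset ι)
    (a b : R) (f g : ι → R) :
    ∑ i ∈ s, (a * f i + b * g i) = a * ∑ i ∈ s, f i + b * ∑ i ∈ s, g i := by
  rw [sum_add_distrib, mul_sum, mul_sum]

theorem ConcaveOn.smul_add_smul_le_of_le {𝕜 E β : Type*} [Semiring 𝕜] [PartialOrder 𝕜]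
    [AddCommMonoid E] [AddCommMonoid β] [PartialOrder β] [IsOrderedAddMonoid β] [Module 𝕜 E]
    [Module 𝕜 β] [PosSMulMono 𝕜 β] {s : Set E} {f : E → β} (hf : ConcaveOn 𝕜 s f)
    {x y : E} {u v : β} (hx : x ∈ s) (hy : y ∈ s) (hu : u ≤ f x) (hv : v ≤ f y)
    {a b : 𝕜} (ha : 0 ≤ a) (hb : 0 ≤ b) (hab : a + b = 1) :
    a • u + b • v ≤ f (a • x + b • y) :=
  (hf.convex_hypograph (x := (x, u)) ⟨hx, hu⟩ (y := (y, v)) ⟨hy, hv⟩ ha hb hab).2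

theorem continuous_relaxed_feasible_set_convex_general
    (E K : Type*) [Fintype E] [Fintype K]
    (T : ℝ)
    (d : E → K → ℝ → ℝ)
    (hd : ∀ i k, ConcaveOn ℝ (Set.Ici (0 : ℝ)) (d i k))
    (s : E → ℝ → ℝ)
    (hs : ∀ i, ConcaveOn ℝ (Set.Ici (0 : ℝ)) (s i))
    (w : E → K → ℝ) (hw : ∀ i k, 0 < w i k)
    (R : ℝ → E → E → K → ℝ)
    (lam : ℝ → E → K → ℝ) :
    Convex ℝ {p : (ℝ → E → K → ℝ) × (ℝ → E → K → ℝ) × (ℝ → E → E → K → ℝ) |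
      ∀ t ∈ Set.Icc (0 : ℝ) T, ∀ i j k,
        HasDerivAt (fun u => p.1 u i k)
          (lam t i k + (∑ j', p.2.2 t j' i k) - p.2.1 t i k) t ∧
        0 ≤ p.1 t i k ∧
        (0 ≤ p.2.1 t i k ∧ p.2.1 t i k ≤ d i k (p.1 t i k)) ∧
        (∑ k', ∑ j', p.2.2 t j' i k') ≤ s i (∑ k', w i k' * p.1 t i k') ∧
        p.2.2 t i j k = R t i j k * p.2.1 t i k ∧
        0 ≤ p.2.2 t i j k} := by
  rintro ⟨x₀, z₀, f₀⟩ h₀ ⟨x₁, z₁, f₁⟩ h₁ a b ha hb hab t ht i j k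
  simp only [Set.mem_ofPred_eq] at h₀ h₁
  obtain ⟨hD₀, hx₀, ⟨hz₀, hzd₀⟩, hsup₀, hR₀, hf₀⟩ := h₀ t ht i j k
  obtain ⟨hD₁, hx₁, ⟨hz₁, hzd₁⟩, hsup₁, hR₁, hf₁⟩ := h₁ t ht i j k
  have load_nonneg : ∀ x : ℝ → E → K → ℝ, (∀ k', 0 ≤ x t i k') →
      0 ≤ ∑ k', w i k' * x t i k' :=
    fun x hx ↦ sum_nonneg fun k' _ ↦ mul_nonneg (hw i k').le (hx k')
  simp only [Prod.smul_mk, Prod.mk_add_mk, Pi.add_apply, Pi.smul_apply,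
    smul_eq_mul, sum_mul_add_mul]
  refine ⟨?_, by positivity, ⟨by positivity, ?_⟩, ?_,
    by linear_combination a * hR₀ + b * hR₁, by positivity⟩
  · refine ((hD₀.const_mul a).add (hD₁.const_mul b)).congr_deriv ?_
    linear_combination lam t i k * hab
  · exact (hd i k).smul_add_smul_le_of_le hx₀ hx₁ hzd₀ hzd₁ ha hb hab
  · simp only [mul_add, mul_left_comm (w i _), sum_mul_add_mul]
    exact (hs i).smul_add_smul_le_of_le (load_nonneg x₀ fun k' ↦ (h₀ t ht i j k').2.1)
      (load_nonneg x₁ fun k' ↦ (h₁ t ht i j k').2.1) hsup₀ hsup₁ ha hb hab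

/-- The feasible set of the continuous-time relaxed MC-FNC problem (trajectories
`(x, z, f)` satisfying the mass-conservation ODE, nonnegativity, demand
constraints with `d i k` concave on `[0, ∞)`, aggregate supply constraints with
`s i` concave on `[0, ∞)` and positive weights, and routing equalities) is a
convex subset of the product function space, i.e. convex combinations
`((1-β)x⁰+βx¹, (1-β)z⁰+βz¹, (1-β)f⁰+βf¹)` of feasible triples are feasible. -/
theorem continuous_relaxed_feasible_set_convex
    (E K : Type*) [Fintype E] [Fintype K]
    (T : ℝ) (hT : 0 < T)
    (d : E → K → ℝ → ℝ)
    (hd : ∀ i k, ConcaveOn ℝ (Set.Ici (0 : ℝ)) (d i k))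
    (s : E → ℝ → ℝ)
    (hs : ∀ i, ConcaveOn ℝ (Set.Ici (0 : ℝ)) (s i))
    (w : E → K → ℝ) (hw : ∀ i k, 0 < w i k)
    (R : ℝ → E → E → K → ℝ) (hR : ∀ t i j k, 0 ≤ R t i j k)
    (lam : ℝ → E → K → ℝ) :
    Convex ℝ {p : (ℝ → E → K → ℝ) × (ℝ → E → K → ℝ) × (ℝ → E → E → K → ℝ) |
      ∀ t ∈ Set.Icc (0 : ℝ) T, ∀ i j k,
        HasDerivAt (fun u => p.1 u i k)
          (lam t i k + (∑ j', p.2.2 t j' i k) - p.2.1 t i k) t ∧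
        0 ≤ p.1 t i k ∧
        (0 ≤ p.2.1 t i k ∧ p.2.1 t i k ≤ d i k (p.1 t i k)) ∧
        (∑ k', ∑ j', p.2.2 t j' i k') ≤ s i (∑ k', w i k' * p.1 t i k') ∧
        p.2.2 t i j k = R t i j k * p.2.1 t i k ∧
        0 ≤ p.2.2 t i j k} :=
  continuous_relaxed_feasible_set_convex_general E K T d hd s hs w hw R lam
end
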